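/- arXiv:1709.00198 — 4 statements merged into one kernel-verified Lean document; each statement's English description precedes it below -/
import Mathlib

section
/- For every integer n ≥ 2 and every real number x with 0 ≤ x ≤ n − 1, one has ((n−1)/n)^(n−x) − x/n ≥ 0 (equivalently, ((n−1)/n)^(n−x) ≥ x/n), where the power is the real power with base (n−1)/n. -/
theorem div_le_sub_one_div_rpow_sub {a x : ℝ} (ha : 1 ≤ a) (hx : x ≤ a - 1) :
    x / a ≤ ((a - 1) / a) ^ (a - x) := by
  have ha0 : 0 < a := by linarith
  have hs : -1 ≤ -(1 / a) := neg_le_neg ((div_le_one ha0).2 ha)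
  have bernoulli := one_add_mul_self_le_rpow_one_add hs (by linarith : 1 ≤ a - x)
  calc x / a = 1 + (a - x) * -(1 / a) := by field_simp; ring
    _ ≤ (1 + -(1 / a)) ^ (a - x) := bernoulli
    _ = ((a - 1) / a) ^ (a - x) := by congr 1; field_simp; ring

theorem stmt_0_general (n : ℕ) (x : ℝ) (hx0 : 0 ≤ x) (hx1 : x ≤ (n : ℝ) - 1) :
    (((n : ℝ) - 1) / n) ^ ((n : ℝ) - x) - x / n ≥ 0 :=
  sub_nonneg.2 (div_le_sub_one_div_rpow_sub (by linarith) hx1)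

/-- For every integer `n ≥ 2` and every real `x` with `0 ≤ x ≤ n - 1`,
`((n-1)/n) ^ (n - x) - x/n ≥ 0`, where the power is the real power. -/
theorem stmt_0 (n : ℕ) (hn : 2 ≤ n) (x : ℝ) (hx0 : 0 ≤ x) (hx1 : x ≤ (n : ℝ) - 1) :
    (((n : ℝ) - 1) / n) ^ ((n : ℝ) - x) - x / n ≥ 0 :=
  stmt_0_general n x hx0 hx1
end

section
/- Let n ≥ 1 and f ≥ 1 be integers and let u be an integer with 0 ≤ u ≤ n. Then u·(u/n)^f ≤ u·(1 − 1/n)^(f·(n−u)), where both sides are real numbers. In words: if u of the n processes are uninformed, the expected number of processes still uninformed after one round of the regular pull algorithm with fan-in f (each uninformed process choosing f targets independently and uniformly at random from the n processes) is at most the expected number still uninformed after one round of the regular push algorithm with fan-out f (each of the n−u informed processes choosing f targets independently and uniformly at random). -/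
/-
For `u ≤ n` the pull factor `u / n = 1 - (n - u) / n` is, by Bernoulli's inequality, at most
the probability `(1 - 1/n) ^ (n - u)` that a fixed process is missed by `n - u` uniform pushes.
Raising both sides to the power `f` compares pull with fan-in `f` and push with fan-out `f`.
-/

theorem div_le_one_sub_one_div_pow_sub {u n : ℕ} (hu : u ≤ n) :
    (u : ℝ) / n ≤ (1 - 1 / (n : ℝ)) ^ (n - u) := by
  have hbernoulli := one_add_mul_sub_le_pow (a := 1 - 1 / (n : ℝ))
    (by linarith [Nat.one_sub_one_div_cast_nonneg (α := ℝ) n]) (n - u)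
  refine le_trans ?_ hbernoulli
  rcases Nat.eq_zero_or_pos n with rfl | hn
  · simp
  · apply le_of_eq
    rw [Nat.cast_sub hu]
    field_simp
    ring

theorem stmt_1_general (n f u : ℕ) (hu : u ≤ n) :
    (u : ℝ) * ((u : ℝ) / n) ^ f ≤ (u : ℝ) * (1 - 1 / (n : ℝ)) ^ (f * (n - u)) := by
  refine mul_le_mul_of_nonneg_left ?_ u.cast_nonneg
  calc ((u : ℝ) / n) ^ f ≤ ((1 - 1 / (n : ℝ)) ^ (n - u)) ^ f := by
        gcongr
        exact div_le_one_sub_one_div_pow_sub hu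
    _ = (1 - 1 / (n : ℝ)) ^ (f * (n - u)) := by rw [← pow_mul, Nat.mul_comm]

/-- One round of the regular pull algorithm with fan-in `f` leaves, in expectation,
at most as many uninformed processes as one round of the regular push algorithm with
fan-out `f`: `u·(u/n)^f ≤ u·(1 - 1/n)^(f·(n-u))`. -/
theorem stmt_1 (n f u : ℕ) (hn : 1 ≤ n) (hf : 1 ≤ f) (hu : u ≤ n) :
    (u : ℝ) * ((u : ℝ) / n) ^ f ≤ (u : ℝ) * (1 - 1 / (n : ℝ)) ^ (f * (n - u)) :=
  stmt_1_general n f u hu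
end

section
/- For every integer n ≥ 2, the function g(x) = ((n−1)/n)^(n−x) − x/n (real power) is nonincreasing (antitone) on the real interval [0, n−1]. -/
/-!
Writing `b = (n - 1) / n`, the derivative of `x ↦ b ^ (n - x) - x / n` is `-b ^ (n - x) log b - 1 / n`.
For `n - x ≥ 1` we have `b ^ (n - x) ≤ b`, and `-b log b ≤ 1 - b = 1 / n` since `log b ≥ 1 - 1 / b`,
so the derivative is nonpositive on `[0, n - 1]`.
-/

open Set

namespace Real

lemma hasDerivAt_rpow_sub_sub_mul {b : ℝ} (hb : 0 < b) (c k x : ℝ) :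
    HasDerivAt (fun x => b ^ (c - x) - k * x) (-(b ^ (c - x) * log b) - k) x := by
  have hsub : HasDerivAt (fun x => c - x) (-1) x := by
    simpa using (hasDerivAt_id x).const_sub c
  have hpow := (hasStrictDerivAt_const_rpow hb (c - x)).hasDerivAt.comp x hsub
  exact (hpow.sub ((hasDerivAt_id x).const_mul k)).congr_deriv (by ring)

lemma neg_rpow_mul_log_le_one_sub {b y : ℝ} (hb₀ : 0 < b) (hb₁ : b ≤ 1) (hy : 1 ≤ y) :
    -(b ^ y * log b) ≤ 1 - b :=
  calc -(b ^ y * log b) = b ^ y * -log b := by ring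
    _ ≤ b * -log b :=
      mul_le_mul_of_nonneg_right (rpow_le_self_of_le_one hb₀.le hb₁ hy)
        (neg_nonneg.2 (log_nonpos hb₀.le hb₁))
    _ ≤ 1 - b := by linarith [self_sub_one_le_mul_log hb₀.le]

lemma antitoneOn_rpow_sub_sub_mul {b k : ℝ} (hb₀ : 0 < b) (hb₁ : b ≤ 1) (hk : 1 - b ≤ k) (c : ℝ) :
    AntitoneOn (fun x => b ^ (c - x) - k * x) (Iic (c - 1)) := by
  refine antitoneOn_of_hasDerivWithinAt_nonpos (convex_Iic _)
    (fun x _ => (hasDerivAt_rpow_sub_sub_mul hb₀ c k x).continuousAt.continuousWithinAt)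
    (fun x _ => (hasDerivAt_rpow_sub_sub_mul hb₀ c k x).hasDerivWithinAt) fun x hx => ?_
  rw [interior_Iic, mem_Iio] at hx
  linarith [neg_rpow_mul_log_le_one_sub hb₀ hb₁ (y := c - x) (by linarith)]

end Real

/-- For every integer `n ≥ 2`, the function `g(x) = ((n-1)/n)^(n-x) - x/n` (real power)
is nonincreasing on the interval `[0, n-1]`. -/
theorem stmt_2 (n : ℕ) (hn : 2 ≤ n) :
    AntitoneOn (fun x : ℝ => (((n : ℝ) - 1) / n) ^ ((n : ℝ) - x) - x / n)
      (Set.Icc (0 : ℝ) ((n : ℝ) - 1)) := by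
  have hn' : (2 : ℝ) ≤ n := by exact_mod_cast hn
  have hb₀ : 0 < ((n : ℝ) - 1) / n := div_pos (by linarith) (by linarith)
  have hb₁ : ((n : ℝ) - 1) / n ≤ 1 := div_le_one_of_le₀ (by linarith) (by linarith)
  have hk : 1 - ((n : ℝ) - 1) / n = (n : ℝ)⁻¹ := by field_simp; ring
  simpa only [div_eq_inv_mul] using
    (Real.antitoneOn_rpow_sub_sub_mul hb₀ hb₁ hk.le n).mono (Icc_subset_Iic_self (a := 0))
end

section
/- Let n, i, x be real numbers with 0 ≤ x + 1 and x + 1 < n. Then n − (n − i·(x+1))·(n − i − x)/(n − 1 − x) ≤ i·(x + 2). -/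
/-- Algebraic inequality from the inductive step of the pull-expectation lemma:
for reals `n, i, x` with `0 ≤ x + 1` and `x + 1 < n`,
`n - (n - i·(x+1))·(n - i - x)/(n - 1 - x) ≤ i·(x + 2)`. -/
theorem stmt_6 (n i x : ℝ) (hx0 : 0 ≤ x + 1) (hxn : x + 1 < n) :
    n - (n - i * (x + 1)) * (n - i - x) / (n - 1 - x) ≤ i * (x + 2) := by
  have hd : 0 < n - 1 - x := by linarith
  rw [sub_le_iff_le_add, ← sub_le_iff_le_add', le_div_iff₀ hd]
  nlinarith [mul_nonneg (sq_nonneg (i - 1)) hx0]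
end
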